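/- Theorem 3.2(a) (the direct reconstruction as a singular Fourier multiplier): Let f be a Schwartz function on ℝ², ψ ∈ C^∞(S¹) even, m ≥ 1 an integer, ω_j = ω(π j/m), and let f_{ψ,δ}(x) = (2π/m) Σ_{j=1}^{m} ψ(ω_j) G_f(ω_j, x·ω_j) be the discrete filtered backprojection. Then for every Schwartz function ρ on ℝ², ∫_{ℝ²} f_{ψ,δ}(x) 𝓕ρ(x) dx = (π/m) Σ_{j=1}^{2m} ψ(ω_j) ∫_0^∞ t · 𝓕f(t ω_j) ρ(t ω_j) dt; i.e., the distributional Fourier transform of f_{ψ,δ} is (π/m) Σ_{j=1}^{m} ψ(ω_j) δ(ξ·ω_j^⊥) |ξ| 𝓕f(ξ). -/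

import Mathlib

open MeasureTheory Real intervalIntegral
open scoped RealInnerProductSpace

noncomputable section

/-- The plane `ℝ²` as a Euclidean space. -/
abbrev E2 : Type := EuclideanSpace ℝ (Fin 2)

/-- The unit vector `ω(φ) = (cos φ, sin φ)`. -/
def omega (φ : ℝ) : E2 := (WithLp.equiv 2 (Fin 2 → ℝ)).symm ![Real.cos φ, Real.sin φ]

/-- The Fourier transform on `ℝ²`: `𝓕f(ξ) = ∫ e^{−i x·ξ} f(x) dx`. -/
def FT (f : E2 → ℂ) (ξ : E2) : ℂ :=
  ∫ x : E2, Complex.exp (-(Complex.I * (⟪x, ξ⟫ : ℂ))) * f x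

/-- The filtered projection `G_f(ω,p) = (1/(8π²)) ∫ e^{i p q} |q| 𝓕f(qω) dq`,
which equals `ℋℛf` by the Fourier slice theorem. -/
def filtProj (f : E2 → ℂ) (w : E2) (p : ℝ) : ℂ :=
  (1 / (8 * (π : ℂ) ^ 2)) * ∫ q : ℝ, Complex.exp (Complex.I * p * q) * (|q| : ℝ) * FT f (q • w)

/-- The discrete filtered backprojection with angular step `π/m`:
`f_{ψ,δ}(x) = (2π/m) Σ_{j=1}^{m} ψ(ω_j) G_f(ω_j, x·ω_j)`, `ω_j = ω(π j/m)`. -/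
def discreteFBP (f : E2 → ℂ) (ψ : E2 → ℂ) (m : ℕ) (x : E2) : ℂ :=
  (2 * (π : ℂ) / (m : ℂ)) * ∑ j ∈ Finset.Icc 1 m,
    ψ (omega (π * (j : ℝ) / (m : ℝ))) *
      filtProj f (omega (π * (j : ℝ) / (m : ℝ))) ⟪x, omega (π * (j : ℝ) / (m : ℝ))⟫

/-! ### Auxiliary lemmas -/

open scoped FourierTransform
open Complex Set

lemma integral_congr' {α : Type*} [MeasurableSpace α] {μ : Measure α} {f g : α → ℂ}
    (h : ∀ x, f x = g x) : ∫ x, f x ∂μ = ∫ x, g x ∂μ := by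
  exact congrArg _ (funext h)

lemma two_pi_ne : (2 * π : ℝ) ≠ 0 := by positivity

lemma norm_omega (φ : ℝ) : ‖omega φ‖ = 1 := by
  rw [EuclideanSpace.norm_eq]
  have : ∀ i : Fin 2, omega φ i = ![Real.cos φ, Real.sin φ] i := fun i => rfl
  rw [Fin.sum_univ_two, this 0, this 1]
  simp only [Matrix.cons_val_zero, Matrix.cons_val_one, Matrix.head_cons, Real.norm_eq_abs]
  rw [_root_.sq_abs, _root_.sq_abs, Real.cos_sq_add_sin_sq, Real.sqrt_one]

lemma omega_ne_zero (φ : ℝ) : omega φ ≠ 0 := by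
  intro h
  have := norm_omega φ
  rw [h, norm_zero] at this
  norm_num at this

lemma omega_add_pi (φ : ℝ) : omega (φ + π) = - omega φ := by
  have key : ∀ i : Fin 2, omega (φ + π) i = (-omega φ) i := by
    intro i
    fin_cases i
    · show Real.cos (φ + π) = -Real.cos φ
      exact Real.cos_add_pi φ
    · show Real.sin (φ + π) = -Real.sin φ
      exact Real.sin_add_pi φ
  ext i
  exact key i

/-- Relation between `FT` and the mathlib Fourier transform. -/
lemma ft_eq (h : E2 → ℂ) (ξ : E2) : FT h ξ = 𝓕 h ((2 * π)⁻¹ • ξ) := by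
  rw [FT, Real.fourier_eq']
  refine integral_congr' fun v => ?_
  rw [smul_eq_mul]
  have hr : -2 * π * ⟪v, (2 * π)⁻¹ • ξ⟫ = -⟪v, ξ⟫ := by
    rw [real_inner_smul_right, ← mul_assoc]
    have : -2 * π * (2 * π)⁻¹ = -1 := by
      field_simp
    rw [this]
    ring
  congr 2
  rw [hr]
  push_cast
  ring

lemma ft_schwartz_eq (h : SchwartzMap E2 ℂ) (ξ : E2) :
    FT ⇑h ξ = (SchwartzMap.fourierTransformCLM ℂ h) ((2 * π)⁻¹ • ξ) := by
  rw [ft_eq, SchwartzMap.fourierTransformCLM_apply, SchwartzMap.fourier_coe]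

lemma ft_continuous (h : SchwartzMap E2 ℂ) : Continuous (FT ⇑h) := by
  have : FT ⇑h = fun ξ => (SchwartzMap.fourierTransformCLM ℂ h) ((2 * π)⁻¹ • ξ) :=
    funext fun ξ => ft_schwartz_eq h ξ
  rw [this]
  exact (SchwartzMap.fourierTransformCLM ℂ h).continuous.comp (continuous_const_smul _)

lemma ft_integrable (h : SchwartzMap E2 ℂ) : Integrable (FT ⇑h) := by
  have : FT ⇑h = fun ξ => (SchwartzMap.fourierTransformCLM ℂ h) ((2 * π)⁻¹ • ξ) :=
    funext fun ξ => ft_schwartz_eq h ξ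
  rw [this]
  exact (integrable_comp_smul_iff volume
    (⇑(SchwartzMap.fourierTransformCLM ℂ h)) (inv_ne_zero two_pi_ne)).2
    (SchwartzMap.integrable _)

/-- Restriction of a Schwartz function on the plane to a line through the origin. -/
def lineMap (h : SchwartzMap E2 ℂ) (v : E2) (hv : v ≠ 0) : SchwartzMap ℝ ℂ :=
  SchwartzMap.compCLM (𝕜 := ℝ)
    (ContinuousLinearMap.toSpanSingleton ℝ v).hasTemperateGrowth
    ⟨1, ‖v‖⁻¹, fun x => by
      have hv' : (0:ℝ) < ‖v‖ := norm_pos_iff.mpr hv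
      rw [pow_one, ContinuousLinearMap.toSpanSingleton_apply, norm_smul]
      have key : ‖v‖⁻¹ * (1 + ‖x‖ * ‖v‖) = ‖v‖⁻¹ + ‖x‖ := by
        field_simp
      rw [key]
      linarith [inv_pos.mpr hv']⟩ h

lemma lineMap_apply (h : SchwartzMap E2 ℂ) (v : E2) (hv : v ≠ 0) (q : ℝ) :
    lineMap h v hv q = h (q • v) := rfl

lemma integrable_abs_mul (g : SchwartzMap ℝ ℂ) :
    Integrable (fun q : ℝ => |q| * ‖g q‖) := by
  have := g.integrable_pow_mul (μ := volume) 1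
  simpa [Real.norm_eq_abs] using this

/-- Integrability of `q ↦ |q| ‖FT f (q • w)‖`. -/
lemma integrable_abs_mul_ft (f : SchwartzMap E2 ℂ) (w : E2) (hw : w ≠ 0) :
    Integrable (fun q : ℝ => |q| * ‖FT ⇑f (q • w)‖) := by
  have hvne : (2 * π)⁻¹ • w ≠ 0 := smul_ne_zero (inv_ne_zero two_pi_ne) hw
  have key : ∀ q : ℝ, FT ⇑f (q • w)
      = lineMap (SchwartzMap.fourierTransformCLM ℂ f) ((2 * π)⁻¹ • w) hvne q := by
    intro q
    rw [ft_schwartz_eq, lineMap_apply, smul_comm]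
  simp_rw [key]
  exact integrable_abs_mul _

/-- The key inner integral: `∫ e^{i q ⟪x,w⟫} 𝓕ρ(x) dx = (2π)² ρ(q w)`. -/
lemma xint (h : SchwartzMap E2 ℂ) (w : E2) (q : ℝ) :
    ∫ x : E2, Complex.exp (Complex.I * (⟪x, w⟫ : ℝ) * (q : ℝ)) * FT ⇑h x
      = (2 * π : ℂ) ^ 2 * h (q • w) := by
  set g := SchwartzMap.fourierTransformCLM ℂ h with hg
  set F : E2 → ℂ := fun x => Complex.exp (Complex.I * (⟪x, w⟫ : ℝ) * (q : ℝ))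
    * g ((2 * π)⁻¹ • x) with hF
  have hFeq : ∀ x : E2, Complex.exp (Complex.I * (⟪x, w⟫ : ℝ) * (q : ℝ)) * FT ⇑h x = F x := by
    intro x; rw [ft_schwartz_eq]
  rw [integral_congr' hFeq]
  have hcs := MeasureTheory.Measure.integral_comp_smul volume F (2 * π)
  simp only [finrank_euclideanSpace, Fintype.card_fin] at hcs
  have habs : |((2 * π : ℝ) ^ 2)⁻¹| = ((2 * π : ℝ) ^ 2)⁻¹ := by
    rw [abs_of_pos]; positivity
  rw [habs] at hcs
  have hInv : ∫ x : E2, F ((2 * π) • x) = 𝓕⁻ ⇑g (q • w) := by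
    rw [Real.fourierInv_eq']
    refine integral_congr' fun x => ?_
    rw [smul_eq_mul]
    have h1 : (2 * π)⁻¹ • ((2 * π) • x) = x := by
      rw [smul_smul, inv_mul_cancel₀ two_pi_ne, one_smul]
    have hFx : F ((2 * π) • x) = Complex.exp (Complex.I * ((⟪(2 * π) • x, w⟫ : ℝ) : ℂ)
        * ((q : ℝ) : ℂ)) * g ((2 * π)⁻¹ • ((2 * π) • x)) := rfl
    rw [hFx, h1]
    congr 2
    rw [real_inner_smul_left, real_inner_smul_right]
    push_cast
    ring
  have hinv2 : 𝓕⁻ ⇑g (q • w) = h (q • w) := by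
    have : ⇑g = 𝓕 ⇑h := by rw [hg, SchwartzMap.fourierTransformCLM_apply, SchwartzMap.fourier_coe]
    rw [this]
    rw [h.continuous.fourierInv_fourier_eq h.integrable
      (by rw [← this]; exact g.integrable)]
  rw [hInv, hinv2] at hcs
  -- solve for ∫ F
  have : ∫ x : E2, F x = ((2 * π : ℝ) ^ 2) • (h (q • w) : ℂ) := by
    have h2 : ((2 * π : ℝ) ^ 2) ≠ 0 := by positivity
    calc ∫ x : E2, F x = ((2 * π : ℝ) ^ 2) • (((2 * π : ℝ) ^ 2)⁻¹ • ∫ x : E2, F x) := by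
          rw [smul_smul, mul_inv_cancel₀ h2, one_smul]
      _ = ((2 * π : ℝ) ^ 2) • (h (q • w) : ℂ) := by rw [← hcs]
  rw [this, Complex.real_smul]
  push_cast
  ring

/-- The product-space integrand used for Fubini. -/
def Fprod (f ρ : SchwartzMap E2 ℂ) (w : E2) (p : E2 × ℝ) : ℂ :=
  Complex.exp (Complex.I * (⟪p.1, w⟫ : ℝ) * (p.2 : ℝ)) * ((|p.2| : ℝ) : ℂ)
    * FT ⇑f (p.2 • w) * FT ⇑ρ p.1

lemma norm_Fprod (f ρ : SchwartzMap E2 ℂ) (w : E2) (p : E2 × ℝ) :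
    ‖Fprod f ρ w p‖ = ‖FT ⇑ρ p.1‖ * (|p.2| * ‖FT ⇑f (p.2 • w)‖) := by
  rw [Fprod]
  rw [norm_mul, norm_mul, norm_mul]
  have : ‖Complex.exp (Complex.I * (⟪p.1, w⟫ : ℝ) * (p.2 : ℝ))‖ = 1 := by
    rw [Complex.norm_exp]
    have : (Complex.I * (⟪p.1, w⟫ : ℝ) * (p.2 : ℝ)).re = 0 := by simp
    rw [this, Real.exp_zero]
  rw [this]
  simp
  ring

lemma continuous_Fprod (f ρ : SchwartzMap E2 ℂ) (w : E2) :
    Continuous (Fprod f ρ w) := by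
  apply Continuous.mul
  apply Continuous.mul
  apply Continuous.mul
  · exact Complex.continuous_exp.comp <| (continuous_const.mul
      (Complex.continuous_ofReal.comp ((continuous_fst.inner continuous_const)))).mul
      (Complex.continuous_ofReal.comp continuous_snd)
  · exact Complex.continuous_ofReal.comp (continuous_abs.comp continuous_snd)
  · exact (ft_continuous f).comp (continuous_snd.smul continuous_const)
  · exact (ft_continuous ρ).comp continuous_fst

lemma integrable_Fprod (f ρ : SchwartzMap E2 ℂ) (w : E2) (hw : w ≠ 0) :
    Integrable (Fprod f ρ w) (volume.prod volume) := by
  have hbound : Integrable (fun p : E2 × ℝ =>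
      ‖FT ⇑ρ p.1‖ * (|p.2| * ‖FT ⇑f (p.2 • w)‖)) (volume.prod volume) :=
    Integrable.mul_prod (ft_integrable ρ).norm (integrable_abs_mul_ft f w hw)
  refine hbound.mono' (continuous_Fprod f ρ w).aestronglyMeasurable ?_
  filter_upwards with p
  rw [norm_Fprod]

/-- Per-direction computation. -/
lemma dirint (f ρ : SchwartzMap E2 ℂ) (w : E2) (hw : w ≠ 0) :
    ∫ x : E2, filtProj ⇑f w ⟪x, w⟫ * FT ⇑ρ x
      = (1 / 2 : ℂ) * ∫ q : ℝ, ((|q| : ℝ) : ℂ) * FT ⇑f (q • w) * ρ (q • w) := by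
  have h1 : ∀ x : E2, filtProj ⇑f w ⟪x, w⟫ * FT ⇑ρ x
      = (1 / (8 * (π : ℂ) ^ 2)) * ∫ q : ℝ, Fprod f ρ w (x, q) := by
    intro x
    rw [filtProj, mul_assoc, ← MeasureTheory.integral_mul_const]
    rfl
  rw [integral_congr' h1, MeasureTheory.integral_const_mul]
  have hswap : ∫ x : E2, ∫ q : ℝ, Fprod f ρ w (x, q)
      = ∫ q : ℝ, ∫ x : E2, Fprod f ρ w (x, q) :=
    MeasureTheory.integral_integral_swap (integrable_Fprod f ρ w hw)
  rw [hswap]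
  have h2 : ∀ q : ℝ, ∫ x : E2, Fprod f ρ w (x, q)
      = ((|q| : ℝ) : ℂ) * FT ⇑f (q • w) * ((2 * π : ℂ) ^ 2 * ρ (q • w)) := by
    intro q
    have : ∀ x : E2, Fprod f ρ w (x, q)
        = (((|q| : ℝ) : ℂ) * FT ⇑f (q • w)) *
          (Complex.exp (Complex.I * (⟪x, w⟫ : ℝ) * (q : ℝ)) * FT ⇑ρ x) := by
      intro x; rw [Fprod]; ring
    rw [integral_congr' this, MeasureTheory.integral_const_mul, xint ρ w q]
  rw [integral_congr' fun q => h2 q]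
  have h3 : ∀ q : ℝ, ((|q| : ℝ) : ℂ) * FT ⇑f (q • w) * ((2 * π : ℂ) ^ 2 * ρ (q • w))
      = (2 * π : ℂ) ^ 2 * (((|q| : ℝ) : ℂ) * FT ⇑f (q • w) * ρ (q • w)) := by
    intro q; ring
  rw [integral_congr' fun q => h3 q, MeasureTheory.integral_const_mul, ← mul_assoc]
  congr 1
  have hπ : (π : ℂ) ≠ 0 := Complex.ofReal_ne_zero.mpr Real.pi_ne_zero
  field_simp
  ring

lemma dirint_integrable (f ρ : SchwartzMap E2 ℂ) (w : E2) (hw : w ≠ 0) :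
    Integrable (fun x : E2 => filtProj ⇑f w ⟪x, w⟫ * FT ⇑ρ x) := by
  have h1 : (fun x : E2 => filtProj ⇑f w ⟪x, w⟫ * FT ⇑ρ x)
      = fun x : E2 => (1 / (8 * (π : ℂ) ^ 2)) * ∫ q : ℝ, Fprod f ρ w (x, q) := by
    funext x
    rw [filtProj, mul_assoc, ← MeasureTheory.integral_mul_const]
    rfl
  rw [h1]
  exact ((integrable_Fprod f ρ w hw).integral_prod_left).const_mul _

/-- The integrand on the line. -/
lemma integrable_line (f ρ : SchwartzMap E2 ℂ) (w : E2) (hw : w ≠ 0) :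
    Integrable (fun q : ℝ => ((|q| : ℝ) : ℂ) * FT ⇑f (q • w) * ρ (q • w)) := by
  obtain ⟨C, hC⟩ : ∃ C : ℝ, ∀ x : E2, ‖ρ x‖ ≤ C :=
    ⟨(SchwartzMap.seminorm ℝ 0 0) ρ, fun x => ρ.norm_le_seminorm ℝ x⟩
  have hmeas : Continuous (fun q : ℝ => ((|q| : ℝ) : ℂ) * FT ⇑f (q • w) * ρ (q • w)) := by
    apply Continuous.mul
    apply Continuous.mul
    · exact Complex.continuous_ofReal.comp continuous_abs
    · exact (ft_continuous f).comp (continuous_id.smul continuous_const)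
    · exact ρ.continuous.comp (continuous_id.smul continuous_const)
  refine ((integrable_abs_mul_ft f w hw).mul_const C).mono' hmeas.aestronglyMeasurable ?_
  filter_upwards with q
  rw [norm_mul, norm_mul]
  have h1 : ‖((|q| : ℝ) : ℂ)‖ = |q| := by
    simp
  rw [h1]
  have h2 : (0:ℝ) ≤ |q| * ‖FT ⇑f (q • w)‖ := by positivity
  calc |q| * ‖FT ⇑f (q • w)‖ * ‖ρ (q • w)‖
      ≤ |q| * ‖FT ⇑f (q • w)‖ * C := by
        apply mul_le_mul_of_nonneg_left (hC _) h2
    _ = |q| * ‖FT ⇑f (q • w)‖ * C := rfl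

/-- Splitting the line integral into the two half-lines. -/
lemma split_line (f ρ : SchwartzMap E2 ℂ) (w : E2) (hw : w ≠ 0) :
    ∫ q : ℝ, ((|q| : ℝ) : ℂ) * FT ⇑f (q • w) * ρ (q • w)
      = (∫ t in Set.Ioi (0:ℝ), (t : ℂ) * FT ⇑f (t • w) * ρ (t • w))
        + ∫ t in Set.Ioi (0:ℝ), (t : ℂ) * FT ⇑f (t • (-w)) * ρ (t • (-w)) := by
  set u : ℝ → ℂ := fun q => ((|q| : ℝ) : ℂ) * FT ⇑f (q • w) * ρ (q • w) with hu
  have hint := integrable_line f ρ w hw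
  have hsplit : (∫ q in Set.Iic (0:ℝ), u q) + ∫ q in Set.Ioi (0:ℝ), u q = ∫ q : ℝ, u q :=
    integral_Iic_add_Ioi hint.integrableOn hint.integrableOn
  rw [← hsplit]
  have hneg : ∫ q in Set.Iic (0:ℝ), u q = ∫ t in Set.Ioi (0:ℝ), u (-t) := by
    have := integral_comp_neg_Ioi (0:ℝ) u
    rw [neg_zero] at this
    exact this.symm
  have hpos : ∫ q in Set.Ioi (0:ℝ), u q
      = ∫ t in Set.Ioi (0:ℝ), (t : ℂ) * FT ⇑f (t • w) * ρ (t • w) := by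
    refine setIntegral_congr_fun measurableSet_Ioi fun t ht => ?_
    rw [hu]
    simp only
    rw [abs_of_pos ht]
  have hnegval : ∫ t in Set.Ioi (0:ℝ), u (-t)
      = ∫ t in Set.Ioi (0:ℝ), (t : ℂ) * FT ⇑f (t • (-w)) * ρ (t • (-w)) := by
    refine setIntegral_congr_fun measurableSet_Ioi fun t ht => ?_
    rw [hu]
    simp only
    rw [abs_neg, abs_of_pos ht]
    have : (-t) • w = t • (-w) := by rw [neg_smul, smul_neg]
    rw [this]
  rw [hneg, hpos, hnegval, add_comm]

/-- Theorem 3.2(a): the distributional Fourier transform of `f_{ψ,δ}` is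
`(π/m) Σ_{j=1}^{m} ψ(ω_j) δ(ξ·ω_j^⊥) |ξ| 𝓕f(ξ)`, i.e. tested against the
Fourier transform of any Schwartz function `ρ`,
`∫ f_{ψ,δ}(x) 𝓕ρ(x) dx = (π/m) Σ_{j=1}^{2m} ψ(ω_j) ∫_0^∞ t 𝓕f(tω_j) ρ(tω_j) dt`. -/
theorem discreteFBP_fourier_multiplier (f : SchwartzMap E2 ℂ) (ψ : E2 → ℂ)
    (hψ_smooth : ContDiffOn ℝ (⊤ : ℕ∞) ψ {x : E2 | x ≠ 0})
    (hψ_even : ∀ w : E2, ψ (-w) = ψ w)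
    (m : ℕ) (hm : 1 ≤ m) (ρ : SchwartzMap E2 ℂ) :
    ∫ x : E2, discreteFBP (⇑f) ψ m x * FT (⇑ρ) x
      = ((π : ℂ) / (m : ℂ)) * ∑ j ∈ Finset.Icc 1 (2 * m),
          ψ (omega (π * (j : ℝ) / (m : ℝ))) *
            ∫ t in Set.Ioi (0:ℝ),
              (t : ℂ) * FT (⇑f) (t • omega (π * (j : ℝ) / (m : ℝ))) *
                ρ (t • omega (π * (j : ℝ) / (m : ℝ))) := by
  have hmR : (m : ℝ) ≠ 0 := Nat.cast_ne_zero.mpr (by omega)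
  -- abbreviations
  set P : ℕ → ℂ := fun j => ∫ t in Set.Ioi (0:ℝ),
      (t : ℂ) * FT (⇑f) (t • omega (π * (j : ℝ) / (m : ℝ))) *
        ρ (t • omega (π * (j : ℝ) / (m : ℝ))) with hP
  set A : ℕ → ℂ := fun j => ψ (omega (π * (j : ℝ) / (m : ℝ))) * P j with hA
  -- step 1: reduce LHS to sum of per-direction integrals
  have step1 : ∫ x : E2, discreteFBP (⇑f) ψ m x * FT (⇑ρ) x
      = (2 * (π : ℂ) / (m : ℂ)) * ∑ j ∈ Finset.Icc 1 m,
          ψ (omega (π * (j : ℝ) / (m : ℝ))) *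
            ∫ x : E2, filtProj (⇑f) (omega (π * (j : ℝ) / (m : ℝ)))
              ⟪x, omega (π * (j : ℝ) / (m : ℝ))⟫ * FT (⇑ρ) x := by
    have heq : ∀ x : E2, discreteFBP (⇑f) ψ m x * FT (⇑ρ) x
        = (2 * (π : ℂ) / (m : ℂ)) * ∑ j ∈ Finset.Icc 1 m,
            ψ (omega (π * (j : ℝ) / (m : ℝ))) *
              (filtProj (⇑f) (omega (π * (j : ℝ) / (m : ℝ)))
                ⟪x, omega (π * (j : ℝ) / (m : ℝ))⟫ * FT (⇑ρ) x) := by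
      intro x
      rw [discreteFBP, mul_assoc, Finset.sum_mul]
      congr 1
      refine Finset.sum_congr rfl fun j _ => ?_
      ring
    rw [integral_congr' heq, MeasureTheory.integral_const_mul]
    congr 1
    rw [MeasureTheory.integral_finset_sum _ fun j _ =>
      ((dirint_integrable f ρ _ (omega_ne_zero _)).const_mul _)]
    refine Finset.sum_congr rfl fun j _ => ?_
    rw [MeasureTheory.integral_const_mul]
  rw [step1]
  -- step 2: apply dirint and split_line
  have step2 : ∀ j : ℕ,
      ∫ x : E2, filtProj (⇑f) (omega (π * (j : ℝ) / (m : ℝ)))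
          ⟪x, omega (π * (j : ℝ) / (m : ℝ))⟫ * FT (⇑ρ) x
        = (1 / 2 : ℂ) * (P j + ∫ t in Set.Ioi (0:ℝ),
            (t : ℂ) * FT (⇑f) (t • (-(omega (π * (j : ℝ) / (m : ℝ))))) *
              ρ (t • (-(omega (π * (j : ℝ) / (m : ℝ)))))) := by
    intro j
    rw [dirint f ρ _ (omega_ne_zero _), split_line f ρ _ (omega_ne_zero _)]
  -- step 3: identify the reflected term with index j + m
  have homega : ∀ j : ℕ, omega (π * ((j + m : ℕ) : ℝ) / (m : ℝ))
      = - omega (π * (j : ℝ) / (m : ℝ)) := by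
    intro j
    have harg : π * ((j + m : ℕ) : ℝ) / (m : ℝ) = π * (j : ℝ) / (m : ℝ) + π := by
      push_cast
      field_simp
    rw [harg, omega_add_pi]
  have step3 : ∀ j : ℕ,
      ψ (omega (π * (j : ℝ) / (m : ℝ))) *
        ((1 / 2 : ℂ) * (P j + ∫ t in Set.Ioi (0:ℝ),
            (t : ℂ) * FT (⇑f) (t • (-(omega (π * (j : ℝ) / (m : ℝ))))) *
              ρ (t • (-(omega (π * (j : ℝ) / (m : ℝ)))))))
        = (1 / 2 : ℂ) * (A j + A (j + m)) := by
    intro j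
    have h1 : P (j + m) = ∫ t in Set.Ioi (0:ℝ),
        (t : ℂ) * FT (⇑f) (t • (-(omega (π * (j : ℝ) / (m : ℝ))))) *
          ρ (t • (-(omega (π * (j : ℝ) / (m : ℝ))))) := by
      rw [hP]
      simp only
      rw [homega j]
    have h2 : ψ (omega (π * ((j + m : ℕ) : ℝ) / (m : ℝ)))
        = ψ (omega (π * (j : ℝ) / (m : ℝ))) := by
      rw [homega j, hψ_even]
    rw [← h1, hA]
    simp only
    rw [h2]
    ring
  have step4 : ∑ j ∈ Finset.Icc 1 m,
      ψ (omega (π * (j : ℝ) / (m : ℝ))) *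
        ∫ x : E2, filtProj (⇑f) (omega (π * (j : ℝ) / (m : ℝ)))
          ⟪x, omega (π * (j : ℝ) / (m : ℝ))⟫ * FT (⇑ρ) x
      = (1 / 2 : ℂ) * ∑ j ∈ Finset.Icc 1 m, (A j + A (j + m)) := by
    rw [Finset.mul_sum]
    refine Finset.sum_congr rfl fun j _ => ?_
    rw [step2 j, step3 j]
  rw [step4]
  -- step 5: reindex the sum
  have step5 : ∑ j ∈ Finset.Icc 1 m, (A j + A (j + m))
      = ∑ j ∈ Finset.Icc 1 (2 * m), A j := by
    rw [Finset.sum_add_distrib]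
    have hIcc : ∀ n : ℕ, Finset.Icc 1 n = Finset.Ioc 0 n := fun n => by
      rw [← Finset.Icc_add_one_left_eq_Ioc, zero_add]
    rw [hIcc m, hIcc (2 * m)]
    have hshift : ∑ j ∈ Finset.Ioc 0 m, A (j + m)
        = ∑ j ∈ Finset.Ioc m (m + m), A j := by
      refine Finset.sum_nbij' (fun j => j + m) (fun j => j - m) ?_ ?_ ?_ ?_ ?_
      · intro a ha
        simp only [Finset.mem_Ioc] at ha ⊢
        omega
      · intro a ha
        simp only [Finset.mem_Ioc] at ha ⊢
        omega
      · intro a ha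
        show a + m - m = a
        omega
      · intro a ha
        simp only [Finset.mem_Ioc] at ha
        show a - m + m = a
        omega
      · intro a _; rfl
    rw [hshift]
    have h2m : 2 * m = m + m := two_mul m
    rw [h2m]
    exact Finset.sum_Ioc_consecutive _ (Nat.zero_le m) (by omega)
  rw [step5]
  rw [Finset.mul_sum, Finset.mul_sum, Finset.mul_sum]
  refine Finset.sum_congr rfl fun j _ => ?_
  rw [hA]
  simp only
  rw [hP]
  simp only
  ring
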